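/- Let f : ℝ³ → ℝ be a C³ function. Then the set of critical values of f, that is the image f''{x ∈ ℝ³ | df_x = 0} of the critical set under f, is totally disconnected. -/

import Mathlib

/-!
Split the critical set `K` of `f` according to which of `D²f`, `D³f` vanish. Taylor's formula,
with `Df = 0` at both ends, gives `|f y - f x| ≤ 2 L ‖y - x‖³` for `x, y ∈ K` whenever `D²f` is
`L`-Lipschitz on `[x, y]`, so `f` is locally `3`-Hölder on `K` and `μH¹ (f '' A) ≤ C μH³ A` for
small `A ⊆ K`.
Near a critical point where `D²f ≠ 0` (resp. `D²f = 0 ≠ D³f`), `K` lies in the zero set of `Df`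
(resp. `D²f`), whose nonvanishing derivative makes it a Lipschitz graph over a hyperplane; it has
Hausdorff dimension `≤ 2`, hence `μH³ A = 0`. Where `D³f = 0`, `D²f` is `ε`-Lipschitz nearby for
every `ε > 0`, and since `μH³` is locally finite in dimension three the image is again `μH¹`-null.
So the critical values form a Lebesgue-null subset of `ℝ`, which contains no interval.
-/

open Set Metric MeasureTheory Filter Topology Module
open scoped NNReal ENNReal

theorem tsum_measure_inter_eq_of_partition {α : Type*} [MeasurableSpace α] (μ : Measure α)
    {P : ℕ → Set α} (hPm : ∀ n, MeasurableSet (P n)) (hPd : Pairwise (Function.onFun Disjoint P))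
    (hPU : ⋃ n, P n = univ) (s : Set α) : ∑' n, μ (s ∩ P n) = μ s := by
  calc ∑' n, μ (s ∩ P n) = ∑' n, μ.restrict (P n) s := by
        simp only [Measure.restrict_apply' (hPm _)]
    _ = Measure.sum (fun n ↦ μ.restrict (P n)) s := (Measure.sum_apply_of_countable _ _).symm
    _ = μ s := by rw [← Measure.restrict_iUnion hPd hPm, hPU, Measure.restrict_univ]

theorem measure_image_null_of_locally_null {X Y : Type*} [TopologicalSpace X]
    [SecondCountableTopology X] [MeasurableSpace Y] (μ : Measure Y) (f : X → Y) (s : Set X)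
    (h : ∀ x ∈ s, ∃ u ∈ 𝓝[s] x, μ (f '' u) = 0) : μ (f '' s) = 0 :=
  measure_null_of_locally_null (μ := OuterMeasure.comap f μ.toOuterMeasure) s h

theorem isTotallyDisconnected_of_measure_eq_zero {α : Type*} [ConditionallyCompleteLinearOrder α]
    [TopologicalSpace α] [OrderTopology α] [DenselyOrdered α] [MeasurableSpace α]
    {μ : Measure α} [μ.IsOpenPosMeasure] {s : Set α} (hs : μ s = 0) :
    IsTotallyDisconnected s := by
  refine isTotallyDisconnected_iff_lt.2 fun x _ y _ hxy ↦ ?_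
  by_contra! hIoo
  exact (isOpen_Ioo.measure_pos μ (nonempty_Ioo.2 hxy)).ne'
    (measure_mono_null (fun z hz ↦ by_contra fun hzs ↦ hIoo z hzs hz) hs)

theorem holderOnWith_of_dist_le {X Y : Type*} [PseudoMetricSpace X] [PseudoMetricSpace Y]
    {C r : ℝ≥0} {f : X → Y} {s : Set X}
    (h : ∀ x ∈ s, ∀ y ∈ s, dist (f x) (f y) ≤ C * dist x y ^ (r : ℝ)) :
    HolderOnWith C r f s := by
  intro x hx y hy
  rw [edist_dist, edist_dist, ENNReal.ofReal_rpow_of_nonneg dist_nonneg r.coe_nonneg,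
    ← ENNReal.ofReal_coe_nnreal, ← ENNReal.ofReal_mul C.coe_nonneg]
  exact ENNReal.ofReal_le_ofReal (h x hx y hy)

section HausdorffMeasure

variable {X Y : Type*} [MetricSpace X] [TopologicalSpace.SeparableSpace X] [MeasurableSpace X]
  [BorelSpace X] [EMetricSpace Y] [MeasurableSpace Y] [BorelSpace Y] {f : X → Y} {s : Set X}
  {C r : ℝ≥0} {d : ℝ}

theorem hausdorffMeasure_image_le_of_holderOnWith_closedBall (hr : 0 < r) (hd : 0 ≤ d)
    {δ : ℝ} (hδ : 0 < δ) (h : ∀ x ∈ s, HolderOnWith C r f (s ∩ closedBall x δ)) :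
    μH[d] (f '' s) ≤ (C : ℝ≥0∞) ^ d * μH[r * d] s := by
  obtain ⟨P, hPm, hPb, hPdiam, hPU, hPd⟩ := SeparableSpace.exists_measurable_partition_diam_le X hδ
  have hP : ∀ n, HolderOnWith C r f (s ∩ P n) := by
    intro n
    rcases (s ∩ P n).eq_empty_or_nonempty with he | ⟨x, hxs, hxP⟩
    · simp [he]
    refine (h x hxs).mono fun y ⟨hys, hyP⟩ ↦ ⟨hys, ?_⟩
    exact (dist_le_diam_of_mem (hPb n) hyP hxP).trans (hPdiam n)
  calc μH[d] (f '' s) = μH[d] (⋃ n, f '' (s ∩ P n)) := by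
        rw [← image_iUnion, ← inter_iUnion, hPU, inter_univ]
    _ ≤ ∑' n, μH[d] (f '' (s ∩ P n)) := measure_iUnion_le _
    _ ≤ ∑' n, (C : ℝ≥0∞) ^ d * μH[r * d] (s ∩ P n) :=
        ENNReal.tsum_le_tsum fun n ↦ (hP n).hausdorffMeasure_image_le hr hd
    _ = (C : ℝ≥0∞) ^ d * μH[r * d] s := by
        rw [ENNReal.tsum_mul_left, tsum_measure_inter_eq_of_partition _ hPm hPd hPU]

theorem hausdorffMeasure_image_le_of_locally_holderOnWith (hr : 0 < r) (hd : 0 ≤ d)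
    (h : ∀ x ∈ s, ∃ U ∈ 𝓝 x, HolderOnWith C r f (s ∩ U)) :
    μH[d] (f '' s) ≤ (C : ℝ≥0∞) ^ d * μH[r * d] s := by
  set S : ℕ → Set X := fun k ↦ {x ∈ s | HolderOnWith C r f (s ∩ closedBall x (1 / (k + 1)))}
  have hS : ⋃ k, S k = s := by
    refine (iUnion_subset fun k ↦ sep_subset _ _).antisymm fun x hx ↦ ?_
    obtain ⟨U, hU, hxU⟩ := h x hx
    obtain ⟨ρ, hρ, hρU⟩ := Metric.mem_nhds_iff.1 hU
    obtain ⟨k, hk⟩ := exists_nat_one_div_lt hρ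
    exact mem_iUnion.2 ⟨k, hx, hxU.mono (inter_subset_inter_right _
      ((closedBall_subset_ball hk).trans hρU))⟩
  have hmono : Monotone S := fun k l hkl x ⟨hx, hxk⟩ ↦ ⟨hx, hxk.mono
    (inter_subset_inter_right _ (closedBall_subset_closedBall (Nat.one_div_le_one_div hkl)))⟩
  calc μH[d] (f '' s) = ⨆ k, μH[d] (f '' S k) := by
        rw [← hS, image_iUnion]
        exact (monotone_image.comp hmono).measure_iUnion
    _ ≤ (C : ℝ≥0∞) ^ d * μH[r * d] s := iSup_le fun k ↦
        (hausdorffMeasure_image_le_of_holderOnWith_closedBall hr hd Nat.one_div_pos_of_nat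
          fun x hx ↦ hx.2.mono (inter_subset_inter_left _ (sep_subset _ _))).trans
          (by gcongr; exact sep_subset _ _)

theorem hausdorffMeasure_image_eq_zero_of_locally_holderOnWith_small (hr : 0 < r) (hd : 0 < d)
    (hs : μH[r * d] s ≠ ∞)
    (h : ∀ x ∈ s, ∀ ε : ℝ≥0, 0 < ε → ∃ U ∈ 𝓝 x, HolderOnWith ε r f (s ∩ U)) :
    μH[d] (f '' s) = 0 := by
  have hlim : Tendsto (fun ε : ℝ≥0 ↦ (ε : ℝ≥0∞) ^ d * μH[r * d] s) (𝓝[>] 0) (𝓝 0) := by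
    have := ((ENNReal.continuous_rpow_const (y := d)).comp ENNReal.continuous_coe).tendsto 0
    simpa [Function.comp_def, ENNReal.zero_rpow_of_pos hd] using
      ENNReal.Tendsto.mul_const (this.mono_left nhdsWithin_le_nhds) (Or.inr hs)
  refine le_antisymm (ge_of_tendsto hlim (eventually_nhdsWithin_of_forall fun ε hε ↦ ?_)) zero_le
  exact hausdorffMeasure_image_le_of_locally_holderOnWith hr hd.le fun x hx ↦ h x hx ε hε

end HausdorffMeasure

section Taylor

variable {E F : Type*} [NormedAddCommGroup E] [NormedSpace ℝ E] [NormedAddCommGroup F]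
  [NormedSpace ℝ F] {f : E → F} {s : Set E} {M : ℝ≥0}

theorem norm_sub_le_of_fderiv_eq_zero (hf : ContDiff ℝ 2 f) (hs : Convex ℝ s)
    (hM : LipschitzOnWith M (fderiv ℝ (fderiv ℝ f)) s) {x y : E} (hxs : x ∈ s) (hys : y ∈ s)
    (hx : fderiv ℝ f x = 0) (hy : fderiv ℝ f y = 0) :
    ‖f y - f x‖ ≤ 2 * M * ‖y - x‖ ^ 3 := by
  set n := ‖y - x‖
  have hdf := (hf.fderiv_right (m := 1) le_rfl).differentiable one_ne_zero
  have hseg := convex_segment (𝕜 := ℝ) x y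
  have hsub := hs.segment_subset hxs hys
  have hxseg := left_mem_segment ℝ x y
  have hpar : ∀ z ∈ segment ℝ x y, ∃ θ ∈ Icc (0 : ℝ) 1, z - x = θ • (y - x) := by
    rw [segment_eq_image']
    rintro _ ⟨θ, hθ, rfl⟩
    exact ⟨θ, hθ, add_sub_cancel_left _ _⟩
  have hnear : ∀ z ∈ segment ℝ x y, ‖z - x‖ ≤ n := by
    intro z hz
    obtain ⟨θ, hθ, hzx⟩ := hpar z hz
    rw [hzx, norm_smul, Real.norm_of_nonneg hθ.1]
    exact mul_le_of_le_one_left (norm_nonneg _) hθ.2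
  have h₂ : ∀ z ∈ segment ℝ x y, ‖fderiv ℝ (fderiv ℝ f) z - fderiv ℝ (fderiv ℝ f) x‖ ≤ M * n :=
    fun z hz ↦ (hM.norm_sub_le (hsub hz) hxs).trans
      (mul_le_mul_of_nonneg_left (hnear z hz) M.coe_nonneg)
  have h₁ : ∀ z ∈ segment ℝ x y,
      ‖fderiv ℝ f z - fderiv ℝ (fderiv ℝ f) x (z - x)‖ ≤ M * n * n := by
    intro z hz
    have := hseg.norm_image_sub_le_of_norm_fderiv_le' (fun w _ ↦ hdf w) h₂ hxseg hz
    rw [hx, sub_zero] at this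
    exact this.trans (mul_le_mul_of_nonneg_left (hnear z hz) (by positivity))
  have hquad : ‖fderiv ℝ (fderiv ℝ f) x (y - x)‖ ≤ M * n * n := by
    simpa only [hy, zero_sub, norm_neg] using h₁ y (right_mem_segment ℝ x y)
  have h₁' : ∀ z ∈ segment ℝ x y, ‖fderiv ℝ f z‖ ≤ 2 * M * n ^ 2 := by
    intro z hz
    obtain ⟨θ, hθ, hzx⟩ := hpar z hz
    have hlin : ‖fderiv ℝ (fderiv ℝ f) x (z - x)‖ ≤ M * n * n := by
      rw [hzx, map_smul, norm_smul, Real.norm_of_nonneg hθ.1]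
      exact (mul_le_of_le_one_left (norm_nonneg _) hθ.2).trans hquad
    calc ‖fderiv ℝ f z‖
        ≤ ‖fderiv ℝ (fderiv ℝ f) x (z - x)‖ + ‖fderiv ℝ f z - fderiv ℝ (fderiv ℝ f) x (z - x)‖ :=
          norm_le_insert' _ _
      _ ≤ M * n * n + M * n * n := add_le_add hlin (h₁ z hz)
      _ = 2 * M * n ^ 2 := by ring
  calc ‖f y - f x‖ ≤ 2 * M * n ^ 2 * n :=
        hseg.norm_image_sub_le_of_norm_fderiv_le (fun w _ ↦ hf.differentiable two_ne_zero w)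
          h₁' hxseg (right_mem_segment ℝ x y)
    _ = 2 * M * n ^ 3 := by ring

theorem LipschitzOnWith.holderOnWith_inter_setOf_fderiv_eq_zero (hf : ContDiff ℝ 2 f)
    (hs : Convex ℝ s) (hM : LipschitzOnWith M (fderiv ℝ (fderiv ℝ f)) s) :
    HolderOnWith (2 * M) 3 f (s ∩ {x | fderiv ℝ f x = 0}) := by
  refine holderOnWith_of_dist_le fun x hx y hy ↦ ?_
  rw [dist_eq_norm, dist_eq_norm, NNReal.coe_ofNat, Real.rpow_ofNat]
  push_cast
  exact norm_sub_le_of_fderiv_eq_zero hf hs hM hy.1 hx.1 hy.2 hx.2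

theorem LipschitzOnWith.exists_mem_nhds_holderOnWith {t : Set E} {a : E} (hf : ContDiff ℝ 2 f)
    (ht : t ∈ 𝓝 a) (hM : LipschitzOnWith M (fderiv ℝ (fderiv ℝ f)) t) :
    ∃ U ∈ 𝓝 a, HolderOnWith (2 * M) 3 f (U ∩ {x | fderiv ℝ f x = 0}) := by
  obtain ⟨ρ, hρ, hball⟩ := Metric.mem_nhds_iff.1 ht
  exact ⟨ball a ρ, ball_mem_nhds a hρ,
    (hM.mono hball).holderOnWith_inter_setOf_fderiv_eq_zero hf (convex_ball a ρ)⟩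

end Taylor

section Dimension

variable {E G : Type*} [NormedAddCommGroup E] [NormedSpace ℝ E] [FiniteDimensional ℝ E]
  [NormedAddCommGroup G] [NormedSpace ℝ G]

theorem dimH_lt_finrank_of_abs_apply_sub_le {ℓ : E →L[ℝ] ℝ} {u : E} (hu : ℓ u ≠ 0) {S : Set E}
    (hS : ∀ x ∈ S, ∀ y ∈ S, 2 * ‖u‖ * |ℓ (x - y)| ≤ |ℓ u| * ‖x - y‖) :
    dimH S < finrank ℝ E := by
  set π : E →L[ℝ] E := ContinuousLinearMap.id ℝ E - (ℓ u)⁻¹ • ℓ.smulRight u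
  have hπ : ∀ v, ℓ (π v) = 0 := fun v ↦ by simp [π, mul_comm (ℓ v), hu]
  have hdecomp : ∀ v, v = π v + (ℓ v / ℓ u) • u := fun v ↦ by
    simp [π, div_eq_inv_mul, mul_smul]
  have hanti : AntilipschitzWith 2 (S.domRestrict π) := by
    refine AntilipschitzWith.of_le_mul_dist fun ⟨x, hx⟩ ⟨y, hy⟩ ↦ ?_
    simp only [Subtype.dist_eq, dist_eq_norm, domRestrict_apply, NNReal.coe_ofNat]
    rw [← map_sub]
    have hℓ : |ℓ (x - y)| / |ℓ u| * ‖u‖ ≤ ‖x - y‖ / 2 := by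
      rw [div_mul_eq_mul_div, div_le_div_iff₀ (abs_pos.2 hu) two_pos]
      linarith [hS x hx y hy]
    have := norm_add_le (π (x - y)) ((ℓ (x - y) / ℓ u) • u)
    rw [← hdecomp, norm_smul, Real.norm_eq_abs, abs_div] at this
    linarith
  have hker : π '' S ⊆ (LinearMap.ker (ℓ : E →ₗ[ℝ] ℝ) : Set E) := by
    rintro _ ⟨v, -, rfl⟩
    exact hπ v
  have hne : LinearMap.ker (ℓ : E →ₗ[ℝ] ℝ) ≠ ⊤ := fun h ↦
    hu (LinearMap.mem_ker.1 (h ▸ Submodule.mem_top))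
  calc dimH S = dimH (univ : Set S) := by
        rw [← (isometry_subtype_coe (s := S)).dimH_image, image_univ, Subtype.range_coe]
    _ ≤ dimH (range (S.domRestrict π)) := by
        rw [← image_univ]; exact hanti.le_dimH_image _
    _ ≤ dimH (range (LinearMap.ker (ℓ : E →ₗ[ℝ] ℝ)).subtypeL) := by
        rw [range_domRestrict, Submodule.coe_subtypeL, Submodule.coe_subtype, Subtype.range_coe]
        exact dimH_mono hker
    _ ≤ finrank ℝ (LinearMap.ker (ℓ : E →ₗ[ℝ] ℝ)) := ContinuousLinearMap.contDiff _ |>.dimH_range_le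
    _ < finrank ℝ E := by exact_mod_cast Submodule.finrank_lt hne

theorem HasStrictFDerivAt.exists_mem_nhds_dimH_zeroSet_inter_lt {φ : E → G} {φ' : E →L[ℝ] G}
    {a : E} (hφ : HasStrictFDerivAt φ φ' a) (hφ' : φ' ≠ 0) :
    ∃ U ∈ 𝓝 a, dimH ({x | φ x = 0} ∩ U) < finrank ℝ E := by
  obtain ⟨u, hu⟩ : ∃ u, φ' u ≠ 0 := by
    by_contra! h
    exact hφ' (ContinuousLinearMap.ext h)
  obtain ⟨Λ, hΛ, hΛu⟩ := exists_dual_vector ℝ (φ' u) (norm_ne_zero_iff.2 hu)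
  replace hΛu : Λ (φ' u) = ‖φ' u‖ := hΛu
  have hu0 : 0 < ‖u‖ := norm_pos_iff.2 fun h ↦ hu (by simp [h])
  have hc : 0 < ‖φ' u‖ / (2 * ‖u‖) := div_pos (norm_pos_iff.2 hu) (by positivity)
  obtain ⟨U, hU, happrox⟩ :=
    hφ.approximates_deriv_on_nhds (c := ⟨‖φ' u‖ / (2 * ‖u‖), hc.le⟩) (Or.inr hc)
  refine ⟨U, hU, dimH_lt_finrank_of_abs_apply_sub_le (ℓ := Λ.comp φ') (u := u)
    (by simpa [hΛu] using hu) fun x hx y hy ↦ ?_⟩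
  have happ := happrox x hx.2 y hy.2
  rw [hx.1, hy.1, zero_sub_zero, zero_sub, norm_neg] at happ
  have hΛle : |Λ (φ' (x - y))| ≤ ‖φ' (x - y)‖ := by
    simpa [hΛ] using Λ.le_opNorm (φ' (x - y))
  calc 2 * ‖u‖ * |Λ (φ' (x - y))| ≤ 2 * ‖u‖ * (‖φ' u‖ / (2 * ‖u‖) * ‖x - y‖) := by
        gcongr; exact hΛle.trans happ
    _ = |Λ (φ' u)| * ‖x - y‖ := by rw [hΛu, abs_norm]; field_simp

end Dimension

section CriticalValues

variable {E F : Type*} [NormedAddCommGroup E] [NormedSpace ℝ E] [FiniteDimensional ℝ E]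
  [MeasurableSpace E] [BorelSpace E] [NormedAddCommGroup F] [NormedSpace ℝ F]
  [MeasurableSpace F] [BorelSpace F] {f : E → F}

theorem hausdorffMeasure_image_eq_zero_of_regular_zeroSet {G : Type*} [NormedAddCommGroup G]
    [NormedSpace ℝ G] (hE : finrank ℝ E ≤ 3) (hf : ContDiff ℝ 3 f) {φ : E → G}
    (hφ : ContDiff ℝ 1 φ) {s : Set E} (hcrit : ∀ x ∈ s, fderiv ℝ f x = 0)
    (hφ₀ : ∀ x ∈ s, φ x = 0) (hφ' : ∀ x ∈ s, fderiv ℝ φ x ≠ 0) :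
    μH[1] (f '' s) = 0 := by
  refine measure_image_null_of_locally_null _ _ _ fun a ha ↦ ?_
  obtain ⟨U, hU, hdim⟩ := (hφ.contDiffAt.hasStrictFDerivAt one_ne_zero)
    |>.exists_mem_nhds_dimH_zeroSet_inter_lt (hφ' a ha)
  have hf₂ : ContDiff ℝ 1 (fderiv ℝ (fderiv ℝ f)) :=
    (hf.fderiv_right (m := 2) le_rfl).fderiv_right le_rfl
  obtain ⟨M, t, ht, hM⟩ := hf₂.contDiffAt.exists_lipschitzOnWith (x := a)
  obtain ⟨V, hV, hhol⟩ := hM.exists_mem_nhds_holderOnWith (hf.of_le (by norm_num)) ht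
  refine ⟨s ∩ (U ∩ V), inter_mem_nhdsWithin s (inter_mem hU hV), ?_⟩
  have hnull : μH[((3 : ℝ≥0) : ℝ) * 1] (s ∩ (U ∩ V)) = 0 := by
    rw [mul_one]
    refine hausdorffMeasure_of_dimH_lt (lt_of_le_of_lt ?_ (hdim.trans_le ?_))
    · exact dimH_mono fun x hx ↦ ⟨hφ₀ x hx.1, hx.2.1⟩
    · exact_mod_cast hE
  refine le_antisymm ?_ zero_le
  calc μH[1] (f '' (s ∩ (U ∩ V)))
      ≤ ((2 * M : ℝ≥0) : ℝ≥0∞) ^ (1 : ℝ) * μH[((3 : ℝ≥0) : ℝ) * 1] (s ∩ (U ∩ V)) :=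
        (hhol.mono fun x hx ↦ ⟨hx.2.2, hcrit x hx.1⟩).hausdorffMeasure_image_le
          three_pos zero_le_one
    _ = 0 := by rw [hnull, mul_zero]

theorem hausdorffMeasure_image_eq_zero_of_third_fderiv_eq_zero (hE : finrank ℝ E = 3)
    (hf : ContDiff ℝ 3 f) {s : Set E}
    (hs : ∀ x ∈ s, fderiv ℝ f x = 0 ∧ fderiv ℝ (fderiv ℝ (fderiv ℝ f)) x = 0) :
    μH[1] (f '' s) = 0 := by
  refine measure_image_null_of_locally_null _ _ _ fun a _ ↦
    ⟨s ∩ ball a 1, inter_mem_nhdsWithin _ (ball_mem_nhds a one_pos), ?_⟩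
  have hfin : μH[((3 : ℝ≥0) : ℝ) * 1] (s ∩ ball a 1) ≠ ∞ := by
    rw [NNReal.coe_ofNat, mul_one, show (3 : ℝ) = finrank ℝ E by simp [hE]]
    exact ((measure_mono inter_subset_right).trans_lt measure_ball_lt_top).ne
  refine hausdorffMeasure_image_eq_zero_of_locally_holderOnWith_small three_pos one_pos hfin
    fun x hx ε hε ↦ ?_
  have hf₂ : ContDiff ℝ 1 (fderiv ℝ (fderiv ℝ f)) :=
    (hf.fderiv_right (m := 2) le_rfl).fderiv_right le_rfl
  obtain ⟨t, ht, hLip⟩ := hf₂.contDiffAt.exists_lipschitzOnWith_of_nnnorm_lt (x := x) (ε / 2)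
    (by rw [(hs x hx.1).2, nnnorm_zero]; exact half_pos hε)
  obtain ⟨V, hV, hhol⟩ := hLip.exists_mem_nhds_holderOnWith (hf.of_le (by norm_num)) ht
  rw [mul_div_cancel₀ _ two_ne_zero] at hhol
  exact ⟨V, hV, hhol.mono fun y hy ↦ ⟨hy.2, (hs y hy.1.1).1⟩⟩

theorem hausdorffMeasure_image_setOf_fderiv_eq_zero (hE : finrank ℝ E = 3)
    (hf : ContDiff ℝ 3 f) : μH[1] (f '' {x | fderiv ℝ f x = 0}) = 0 := by
  have hf₁ : ContDiff ℝ 1 (fderiv ℝ f) := hf.fderiv_right (by norm_num)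
  have hf₂ : ContDiff ℝ 1 (fderiv ℝ (fderiv ℝ f)) :=
    (hf.fderiv_right (m := 2) le_rfl).fderiv_right le_rfl
  have hcover : {x | fderiv ℝ f x = 0} ⊆
      {x | fderiv ℝ f x = 0 ∧ fderiv ℝ (fderiv ℝ f) x ≠ 0} ∪
      {x | fderiv ℝ f x = 0 ∧ fderiv ℝ (fderiv ℝ f) x = 0 ∧
        fderiv ℝ (fderiv ℝ (fderiv ℝ f)) x ≠ 0} ∪
      {x | fderiv ℝ f x = 0 ∧ fderiv ℝ (fderiv ℝ (fderiv ℝ f)) x = 0} := by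
    intro x hx
    by_cases h₂ : fderiv ℝ (fderiv ℝ f) x = 0 <;>
      by_cases h₃ : fderiv ℝ (fderiv ℝ (fderiv ℝ f)) x = 0 <;> simp_all
  refine measure_mono_null (image_mono hcover) ?_
  rw [image_union, image_union]
  refine measure_union_null (measure_union_null ?_ ?_) ?_
  · exact hausdorffMeasure_image_eq_zero_of_regular_zeroSet hE.le hf hf₁ (fun x hx ↦ hx.1)
      (fun x hx ↦ hx.1) (fun x hx ↦ hx.2)
  · exact hausdorffMeasure_image_eq_zero_of_regular_zeroSet hE.le hf hf₂ (fun x hx ↦ hx.1)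
      (fun x hx ↦ hx.2.1) (fun x hx ↦ hx.2.2)
  · exact hausdorffMeasure_image_eq_zero_of_third_fderiv_eq_zero hE hf fun x hx ↦ hx

end CriticalValues

/-- The set of critical values of a C³ function ℝ³ → ℝ is totally disconnected. -/
theorem criticalValues_totallyDisconnected
    (f : EuclideanSpace ℝ (Fin 3) → ℝ) (hf : ContDiff ℝ 3 f) :
    IsTotallyDisconnected (f '' {x | fderiv ℝ f x = 0}) := by
  refine isTotallyDisconnected_of_measure_eq_zero (μ := volume) ?_
  rw [← hausdorffMeasure_real]
  exact hausdorffMeasure_image_setOf_fderiv_eq_zero finrank_euclideanSpace_fin hf
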